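/- There exists a constant C > 0 such that the following holds: for all δ > 0, every real K ≥ 1, every function u : ℤ³ → ℂ with u(0) = 0 and |u(α)| ≤ δ/|α|² for all α with |α| ≥ K, and every k ∈ ℤ³ with |k| ≥ 2K, one has Σ_{α ∈ ℤ³, K ≤ |α| ≤ 2|k|, |k−α| ≥ |k|/2} |α|·|u(α)|·|u(k−α)| ≤ C·δ². -/

import Mathlib

/-!
On the summation range `|k - α| ≥ |k|/2 ≥ K`, so the decay of `u` bounds each summand by
`|α| · δ/|α|² · 4δ/|k|² = 4δ²/(|k|² |α|)`.
It remains to see that `∑_{0 < |α| ≤ 2|k|} 1/|α| = O(|k|²)`, which follows by summing over the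
cubical shells `max_i |α_i| = n`: the `n`-th shell has `O(n²)` points, each contributing
at most `1/n`.
-/

/-- The Euclidean norm of a lattice point in `ℤ³`. -/
noncomputable def znorm (a : Fin 3 → ℤ) : ℝ := Real.sqrt (∑ i, ((a i : ℝ)) ^ 2)

open Finset

lemma znorm_nonneg (a : Fin 3 → ℤ) : 0 ≤ znorm a := Real.sqrt_nonneg _

lemma abs_le_znorm (a : Fin 3 → ℤ) (i : Fin 3) : |(a i : ℝ)| ≤ znorm a := by
  rw [← Real.sqrt_sq_eq_abs]
  exact Real.sqrt_le_sqrt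
    (single_le_sum (f := fun j => (a j : ℝ) ^ 2) (fun j _ => sq_nonneg _) (mem_univ i))

noncomputable def cube (M : ℕ) : Finset (Fin 3 → ℤ) :=
  Fintype.piFinset fun _ => Icc (-(M : ℤ)) M

lemma mem_cube {a : Fin 3 → ℤ} {M : ℕ} : a ∈ cube M ↔ ∀ i, |a i| ≤ M := by
  simp only [cube, Fintype.mem_piFinset, mem_Icc, abs_le]

lemma card_cube (M : ℕ) : #(cube M) = (2 * M + 1) ^ 3 := by
  have : #(Icc (-(M : ℤ)) M) = 2 * M + 1 := by rw [Int.card_Icc]; omega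
  simp [cube, Fintype.card_piFinset, this]

lemma cube_mono : Monotone cube := fun _ _ hMN _ ha =>
  mem_cube.2 fun i => (mem_cube.1 ha i).trans (by exact_mod_cast hMN)

lemma cube_zero : cube 0 = {0} := by
  ext a
  simp only [mem_cube, Nat.cast_zero, abs_nonpos_iff, mem_singleton, funext_iff, Pi.zero_apply]

lemma card_cube_succ_sdiff_le (M : ℕ) : (#(cube (M + 1) \ cube M) : ℝ) ≤ 26 * (M + 1) ^ 2 := by
  rw [card_sdiff_of_subset (cube_mono M.le_succ), card_cube, card_cube,
    Nat.cast_sub (Nat.pow_le_pow_left (by omega) 3)]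
  push_cast
  nlinarith [(M.cast_nonneg : (0 : ℝ) ≤ M)]

lemma mem_cube_of_znorm_le {a : Fin 3 → ℤ} {M : ℕ} (h : znorm a ≤ M) : a ∈ cube M :=
  mem_cube.2 fun i => by exact_mod_cast (abs_le_znorm a i).trans h

lemma succ_le_znorm_of_notMem_cube {a : Fin 3 → ℤ} {M : ℕ} (h : a ∉ cube M) :
    (M : ℝ) + 1 ≤ znorm a := by
  obtain ⟨i, hi⟩ : ∃ i, (M : ℤ) < |a i| := by simpa [mem_cube] using h
  exact le_trans (by exact_mod_cast hi) (abs_le_znorm a i)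

/-- The origin contributes `0⁻¹ = 0` to the sum. -/
lemma sum_inv_znorm_cube_le (M : ℕ) : ∑ a ∈ cube M, (znorm a)⁻¹ ≤ 13 * M * (M + 1) := by
  induction M with
  | zero => simp [cube_zero, znorm]
  | succ M ih =>
    have hshell : ∑ a ∈ cube (M + 1) \ cube M, (znorm a)⁻¹ ≤ 26 * ((M : ℝ) + 1) :=
      calc ∑ a ∈ cube (M + 1) \ cube M, (znorm a)⁻¹
          ≤ #(cube (M + 1) \ cube M) * ((M : ℝ) + 1)⁻¹ := by
            rw [← nsmul_eq_mul]
            refine sum_le_card_nsmul _ _ _ fun a ha => inv_anti₀ (by positivity) ?_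
            exact succ_le_znorm_of_notMem_cube (mem_sdiff.1 ha).2
        _ ≤ 26 * ((M : ℝ) + 1) ^ 2 * ((M : ℝ) + 1)⁻¹ := by
            gcongr
            exact card_cube_succ_sdiff_le M
        _ = 26 * ((M : ℝ) + 1) := by field_simp
    rw [← sum_sdiff (cube_mono M.le_succ)]
    push_cast
    linarith

lemma tsum_subtype_le_sum {β γ : Type*} [AddCommMonoid γ] [PartialOrder γ]
    [IsOrderedAddMonoid γ] [TopologicalSpace γ] {p : β → Prop} {f g : β → γ} (s : Finset β)
    (hps : ∀ a, p a → a ∈ s) (hfg : ∀ a, p a → f a ≤ g a) (hg : ∀ a ∈ s, 0 ≤ g a) :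
    ∑' a : {a // p a}, f a ≤ ∑ a ∈ s, g a :=
  calc ∑' a : {a // p a}, f a = ∑ a ∈ s, {a | p a}.indicator f a :=
        (tsum_subtype {a | p a} f).trans
          (tsum_eq_sum fun a ha => Set.indicator_of_notMem (fun hpa => ha (hps a hpa)) f)
    _ ≤ ∑ a ∈ s, g a :=
        sum_le_sum fun a ha => Set.indicator_apply_le' (hfg a) fun _ => hg a ha

lemma znorm_mul_norm_mul_norm_sub_le {δ K : ℝ} (hδ : 0 ≤ δ) {u : (Fin 3 → ℤ) → ℂ}
    (hu : ∀ α, K ≤ znorm α → ‖u α‖ ≤ δ / znorm α ^ 2) {k a : Fin 3 → ℤ} (hK : 0 < K)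
    (hk : 2 * K ≤ znorm k) (ha : K ≤ znorm a) (hka : znorm k / 2 ≤ znorm (k - a)) :
    znorm a * ‖u a‖ * ‖u (k - a)‖ ≤ 4 * δ ^ 2 / znorm k ^ 2 * (znorm a)⁻¹ := by
  have hfar : ‖u (k - a)‖ ≤ 4 * δ / znorm k ^ 2 := by
    refine (hu _ (by linarith)).trans ?_
    rw [div_le_div_iff₀ (by nlinarith) (by nlinarith)]
    nlinarith [mul_self_le_mul_self (by linarith) hka]
  have hnear := hu a ha
  have hapos : 0 < znorm a := by linarith
  calc znorm a * ‖u a‖ * ‖u (k - a)‖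
      ≤ znorm a * (δ / znorm a ^ 2) * (4 * δ / znorm k ^ 2) := by gcongr
    _ = 4 * δ ^ 2 / znorm k ^ 2 * (znorm a)⁻¹ := by field_simp

/-- There is a constant `C > 0` such that: for all `δ > 0`, `K ≥ 1`, every `u : ℤ³ → ℂ` with
`u 0 = 0` and `|u α| ≤ δ/|α|²` for `|α| ≥ K`, and every `k` with `|k| ≥ 2K`,
`∑_{K ≤ |α| ≤ 2|k|, |k−α| ≥ |k|/2} |α|·|u α|·|u (k−α)| ≤ C·δ²`. -/
theorem middle_frequency_piece_bound :
    ∃ C : ℝ, 0 < C ∧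
      ∀ (δ K : ℝ), 0 < δ → 1 ≤ K →
        ∀ u : (Fin 3 → ℤ) → ℂ, u 0 = 0 →
          (∀ α : Fin 3 → ℤ, K ≤ znorm α → ‖u α‖ ≤ δ / znorm α ^ 2) →
          ∀ k : Fin 3 → ℤ, 2 * K ≤ znorm k →
            (∑' α : {a : Fin 3 → ℤ //
                K ≤ znorm a ∧ znorm a ≤ 2 * znorm k ∧ znorm k / 2 ≤ znorm (k - a)},
              znorm α.1 * ‖u α.1‖ * ‖u (k - α.1)‖)
              ≤ C * δ ^ 2 := by
  refine ⟨468, by norm_num, fun δ K hδ hK u _ hu k hk => ?_⟩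
  set R := znorm k
  set M := ⌈2 * R⌉₊
  have hM : (M : ℝ) ≤ 2 * R + 1 := (Nat.ceil_lt_add_one (by linarith)).le
  calc _ ≤ ∑ a ∈ cube M, 4 * δ ^ 2 / R ^ 2 * (znorm a)⁻¹ :=
        tsum_subtype_le_sum _ (fun a ha => mem_cube_of_znorm_le (ha.2.1.trans (Nat.le_ceil _)))
          (fun a ha => znorm_mul_norm_mul_norm_sub_le hδ.le hu (by linarith) hk ha.1 ha.2.2)
          fun a _ => by have := znorm_nonneg a; positivity
    _ ≤ 4 * δ ^ 2 / R ^ 2 * (13 * M * (M + 1)) := by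
        rw [← mul_sum]
        gcongr
        exact sum_inv_znorm_cube_le M
    _ ≤ 468 * δ ^ 2 := by
        rw [div_mul_eq_mul_div, div_le_iff₀ (by nlinarith)]
        have : (13 : ℝ) * M * (M + 1) ≤ 117 * R ^ 2 := by nlinarith [M.cast_nonneg (α := ℝ)]
        nlinarith [sq_nonneg δ]
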